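/- Let X be a Peano continuum and let x ∈ X be a point of Menger order 2 that is a local cut point but not a cut point of X. Then there exist a Peano continuum X̂ and a continuous surjection φ : X̂ → X such that φ⁻¹(y) is a singleton for every y ≠ x, and φ⁻¹(x) consists of exactly two endpoints of X̂. -/

import Mathlib

open Set Topology

def IsCutPoint {X : Type*} [TopologicalSpace X] (x : X) : Prop :=
  ¬ IsPreconnected ({x}ᶜ : Set X)

def IsLocalCutPoint {X : Type*} [TopologicalSpace X] (x : X) : Prop :=
  ∃ U : Set X, IsOpen U ∧ x ∈ U ∧ IsConnected U ∧ ¬ IsPreconnected (U \ {x})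

def MengerOrderLE {X : Type*} [TopologicalSpace X] (x : X) (n : ℕ) : Prop :=
  ∀ U ∈ 𝓝 x, ∃ V ∈ 𝓝 x, V ⊆ U ∧ (frontier V).Finite ∧ (frontier V).ncard ≤ n

/-- `x` is an endpoint: it has a neighborhood basis of sets with one-point
boundaries. -/
def IsEndpoint {X : Type*} [TopologicalSpace X] (x : X) : Prop :=
  ∀ U ∈ 𝓝 x, ∃ V ∈ 𝓝 x, V ⊆ U ∧ ∃ p, frontier V = {p}

/-!
Cut `X` open at `x` inside `X × ℝ`. Separate `U \ {x} = A ∪ B` for a connected open `U ∋ x`,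
and pick a continuous `g : X → [0, 1]` with `g x = 1` vanishing off `U`. Lift `{x}ᶜ` to the
graph of the function that is `0` on `A` and off `U`, and `g` on `B`; it is continuous on `{x}ᶜ`
because `g` vanishes where the two sides meet away from `x`. In the closure of this graph the
sides `A` and `B` end at the two different points `(x, 0)` and `(x, 1)`, and this closure is the
required space: the projection is injective away from `x`, and the space is connected because
`{x}ᶜ` is.

For the endpoints, take a neighbourhood `W` of `x` with at most two boundary points. Near
`(x, 0)` and `(x, 1)` the lifts of `W` are disjoint boxes with nonempty boundaries (by
connectedness), and these boundaries project injectively into `∂W`, so each is one point.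
-/

section Separation

variable {X : Type*} [TopologicalSpace X] {x : X} {U C D : Set X}

theorem mem_closure_of_diff_singleton_subset_union (hU : IsPreconnected U) (hxU : x ∈ U)
    (hC : IsOpen C) (hD : IsOpen D) (hCD : Disjoint C D) (hUCD : U \ {x} ⊆ C ∪ D)
    (hxC : x ∉ C) (hUC : (U ∩ C).Nonempty) : x ∈ closure C := by
  by_contra hx
  have hcover : U ⊆ C ∪ (D ∪ (closure C)ᶜ) := by
    intro z hz
    by_cases hzx : z = x
    · exact Or.inr (Or.inr (hzx ▸ hx))
    · rcases hUCD ⟨hz, hzx⟩ with h | h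
      exacts [Or.inl h, Or.inr (Or.inl h)]
  have hdisj : Disjoint C (D ∪ (closure C)ᶜ) :=
    disjoint_union_right.mpr ⟨hCD, disjoint_compl_right_iff_subset.mpr subset_closure⟩
  exact hxC (hU.subset_left_of_subset_union hC (hD.union isClosed_closure.isOpen_compl) hdisj
    hcover hUC hxU)

/-- A separation of `insert x (V ∩ C)` would extend to one of `V` by adding `D` to the part
containing `x`. -/
theorem IsPreconnected.insert_inter_of_diff_singleton_subset_union {V : Set X}
    (hV : IsPreconnected V) (hxV : x ∈ V) (hC : IsOpen C) (hD : IsOpen D) (hCD : Disjoint C D)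
    (hVCD : V \ {x} ⊆ C ∪ D) : IsPreconnected (insert x (V ∩ C)) := by
  have key : ∀ O₁ O₂ : Set X, IsOpen O₁ → IsOpen O₂ → insert x (V ∩ C) ⊆ O₁ ∪ O₂ → x ∈ O₁ →
      (insert x (V ∩ C) ∩ O₂).Nonempty → (insert x (V ∩ C) ∩ (O₁ ∩ O₂)).Nonempty := by
    intro O₁ O₂ hO₁ hO₂ hcover hx ⟨c, hc, hc₂⟩
    rcases hc with rfl | hc
    · exact ⟨c, mem_insert c _, hx, hc₂⟩
    have hVcover : V ⊆ (O₁ ∪ D) ∪ (O₂ ∩ C) := by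
      intro z hz
      by_cases hzx : z = x
      · exact Or.inl (Or.inl (hzx ▸ hx))
      rcases hVCD ⟨hz, hzx⟩ with hzC | hzD
      · rcases hcover (Or.inr ⟨hz, hzC⟩) with h | h
        exacts [Or.inl (Or.inl h), Or.inr ⟨h, hzC⟩]
      · exact Or.inl (Or.inr hzD)
    obtain ⟨w, hwV, hw₁, hw₂, hwC⟩ := hV _ _ (hO₁.union hD) (hO₂.inter hC) hVcover
      ⟨x, hxV, Or.inl hx⟩ ⟨c, hc.1, hc₂, hc.2⟩
    exact ⟨w, Or.inr ⟨hwV, hwC⟩, hw₁.resolve_right (hCD.notMem_of_mem_left hwC), hw₂⟩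
  intro O₁ O₂ hO₁ hO₂ hcover hne₁ hne₂
  rcases hcover (mem_insert x _) with hx | hx
  · exact key O₁ O₂ hO₁ hO₂ hcover hx hne₂
  · rw [inter_comm O₁]
    exact key O₂ O₁ hO₂ hO₁ (union_comm O₁ O₂ ▸ hcover) hx hne₁

end Separation

theorem ContinuousOn.snd_eq_of_mem_closure_graph {X Z : Type*} [TopologicalSpace X]
    [TopologicalSpace Z] [T2Space Z] {f : X → Z} {s : Set X} (hf : ContinuousOn f s)
    (hs : IsOpen s) {p : X × Z} (hp : p ∈ closure ((fun y => (y, f y)) '' s)) (hps : p.1 ∈ s) :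
    p.2 = f p.1 := by
  by_contra hne
  have hopen : IsOpen ((s ×ˢ univ) ∩ (fun q : X × Z => (q.2, f q.1)) ⁻¹' (diagonal Z)ᶜ) :=
    (continuousOn_snd.prodMk (hf.comp continuousOn_fst fun q hq => hq.1)).isOpen_inter_preimage
      (hs.prod isOpen_univ) isClosed_diagonal.isOpen_compl
  obtain ⟨_, ⟨-, hne'⟩, y, -, rfl⟩ := mem_closure_iff.mp hp _ hopen ⟨⟨hps, trivial⟩, hne⟩
  exact hne' rfl

theorem exists_preimage_prod_ball_subset {X Z : Type*} [TopologicalSpace X] [PseudoMetricSpace Z]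
    {Y : Set (X × Z)} {z : Y} {T : Set Y} (hT : T ∈ 𝓝 z) :
    ∃ O ∈ 𝓝 (z : X × Z).1, ∃ s > 0, Subtype.val ⁻¹' (O ×ˢ Metric.ball (z : X × Z).2 s) ⊆ T := by
  obtain ⟨P, hP, hPT⟩ := (mem_nhds_subtype _ _ _).mp hT
  obtain ⟨O, hO, Q, hQ, hOQ⟩ := mem_nhds_prod_iff.mp (by rwa [Prod.mk.eta])
  obtain ⟨s, hs, hsQ⟩ := Metric.mem_nhds_iff.mp hQ
  exact ⟨O, hO, s, hs, fun w hw => hPT (hOQ ⟨hw.1, hsQ hw.2⟩)⟩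

theorem Set.exists_eq_singleton_of_injOn_of_ncard_le_two {α β : Type*} {F G : Set α} {E : Set β}
    {j : α → β} (hE : E.Finite) (hE₂ : E.ncard ≤ 2) (hj : InjOn j (F ∪ G))
    (hjE : MapsTo j (F ∪ G) E) (hFG : Disjoint F G) (hF : F.Nonempty) (hG : G.Nonempty) :
    ∃ p, F = {p} := by
  have hfin : (F ∪ G).Finite :=
    Finite.of_finite_image (hE.subset (mapsTo_iff_image_subset.mp hjE)) hj
  have hcard : (F ∪ G).ncard ≤ E.ncard := ncard_le_ncard_of_injOn j hjE hj hE
  rw [ncard_union_eq hFG (hfin.subset subset_union_left) (hfin.subset subset_union_right)] at hcard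
  have hF₁ := (ncard_pos (hfin.subset subset_union_left)).mpr hF
  have hG₁ := (ncard_pos (hfin.subset subset_union_right)).mpr hG
  exact ncard_eq_one.mp (by omega)

structure LocalCut (X : Type*) [TopologicalSpace X] (x : X) where
  U : Set X
  A : Set X
  B : Set X
  g : X → ℝ
  isOpen_U : IsOpen U
  isPreconnected_U : IsPreconnected U
  mem_U : x ∈ U
  isOpen_A : IsOpen A
  isOpen_B : IsOpen B
  disjoint_A_B : Disjoint A B
  A_union_B : A ∪ B = U \ {x}
  nonempty_A : A.Nonempty
  nonempty_B : B.Nonempty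
  continuous_g : Continuous g
  g_self : g x = 1
  g_mem_Icc : ∀ y, g y ∈ Icc (0 : ℝ) 1
  g_eq_zero : ∀ y ∉ U, g y = 0

theorem IsLocalCutPoint.nonempty_localCut {X : Type*} [TopologicalSpace X]
    [CompletelyRegularSpace X] [T1Space X] {x : X} (h : IsLocalCutPoint x) :
    Nonempty (LocalCut X x) := by
  obtain ⟨U, hUo, hxU, hUc, hsep⟩ := h
  simp only [IsPreconnected, not_forall, exists_prop, not_nonempty_iff_eq_empty] at hsep
  obtain ⟨u, v, hu, hv, huv, ⟨a, ha⟩, ⟨b, hb⟩, hdisj⟩ := hsep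
  obtain ⟨f, hf, hfx, hfU⟩ :=
    CompletelyRegularSpace.completely_regular x Uᶜ hUo.isClosed_compl (not_not.mpr hxU)
  have hUx : IsOpen (U \ {x}) := hUo.sdiff isClosed_singleton
  refine ⟨⟨U, (U \ {x}) ∩ u, (U \ {x}) ∩ v, fun y => 1 - f y, hUo, hUc.isPreconnected, hxU,
    hUx.inter hu, hUx.inter hv, ?_, ?_, ⟨a, ha⟩, ⟨b, hb⟩,
    continuous_const.sub (continuous_subtype_val.comp hf), by simp [hfx], fun y => ?_,
    fun y hy => by simp [hfU hy]⟩⟩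
  · rw [disjoint_iff_inter_eq_empty, ← subset_empty_iff, ← hdisj]
    rintro y ⟨⟨hy, hyu⟩, -, hyv⟩
    exact ⟨hy, hyu, hyv⟩
  · rw [← inter_union_distrib_left, inter_eq_left.mpr huv]
  · have := (f y).2
    exact ⟨by linarith [this.2], by linarith [this.1]⟩

namespace LocalCut

variable {X : Type*} [TopologicalSpace X] {x : X} (S : LocalCut X x)

def side (b : Bool) : Set X := bif b then S.B else S.A

def sheet (b : Bool) : X → ℝ := bif b then S.g else 0

noncomputable def height : X → ℝ := S.B.indicator S.g

def space : Set (X × ℝ) := closure ((fun y => (y, S.height y)) '' {x}ᶜ)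

/-- Over `core s` each sheet stays within `s` of its value at `x`, while for `s ≤ 1 / 4` the
two sheets are more than `s` apart. -/
def core (s : ℝ) : Set X := S.U ∩ {y | 1 - s < S.g y}

variable {S}

theorem isOpen_side (b : Bool) : IsOpen (S.side b) := by
  cases b
  exacts [S.isOpen_A, S.isOpen_B]

theorem side_subset (b : Bool) : S.side b ⊆ S.U \ {x} := by
  rw [← S.A_union_B]
  cases b
  exacts [subset_union_left, subset_union_right]

theorem disjoint_side {b c : Bool} (h : b ≠ c) : Disjoint (S.side b) (S.side c) := by
  cases b <;> cases c <;> simp only [ne_eq, not_true_eq_false] at h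
  exacts [S.disjoint_A_B, S.disjoint_A_B.symm]

theorem side_union_side_not (b : Bool) : S.side b ∪ S.side (!b) = S.U \ {x} := by
  rw [← S.A_union_B]
  cases b
  exacts [rfl, union_comm _ _]

theorem exists_mem_side {y : X} (hyU : y ∈ S.U) (hyx : y ≠ x) : ∃ b, y ∈ S.side b := by
  rcases (S.A_union_B ▸ ⟨hyU, hyx⟩ : y ∈ S.A ∪ S.B) with h | h
  exacts [⟨false, h⟩, ⟨true, h⟩]

theorem continuous_sheet (b : Bool) : Continuous (S.sheet b) := by
  cases b
  exacts [continuous_const, S.continuous_g]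

theorem height_eq_sheet {b : Bool} {y : X} (hy : y ∈ S.side b) : S.height y = S.sheet b y := by
  cases b
  · exact indicator_of_notMem (S.disjoint_A_B.notMem_of_mem_left hy) _
  · exact indicator_of_mem hy _

theorem mem_closure_side (b : Bool) : x ∈ closure (S.side b) := by
  obtain ⟨y, hy⟩ : (S.side b).Nonempty := by
    cases b
    exacts [S.nonempty_A, S.nonempty_B]
  exact mem_closure_of_diff_singleton_subset_union S.isPreconnected_U S.mem_U (isOpen_side b)
    (isOpen_side (!b)) (disjoint_side (Bool.not_ne_self b).symm) (side_union_side_not b).symm.le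
    (fun h => (side_subset b h).2 rfl) ⟨y, (side_subset b hy).1, hy⟩

theorem height_mem_Icc (y : X) : S.height y ∈ Icc 0 (S.g y) := by
  by_cases hy : y ∈ S.B
  · rw [height, indicator_of_mem hy]
    exact ⟨(S.g_mem_Icc y).1, le_rfl⟩
  · rw [height, indicator_of_notMem hy]
    exact ⟨le_rfl, (S.g_mem_Icc y).1⟩

theorem continuousOn_height : ContinuousOn S.height {x}ᶜ := by
  intro y hyx
  refine ContinuousAt.continuousWithinAt ?_
  by_cases hyU : y ∈ S.U
  · obtain ⟨b, hb⟩ := exists_mem_side hyU hyx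
    refine (S.continuous_sheet b).continuousAt.congr ?_
    filter_upwards [(isOpen_side b).mem_nhds hb] with z hz using (height_eq_sheet hz).symm
  · have hgy : S.g y = 0 := S.g_eq_zero y hyU
    have hy : S.height y = 0 := le_antisymm (hgy ▸ (height_mem_Icc y).2) (height_mem_Icc y).1
    rw [ContinuousAt, hy]
    exact tendsto_of_tendsto_of_tendsto_of_le_of_le tendsto_const_nhds
      (hgy ▸ S.continuous_g.continuousAt) (fun z => (height_mem_Icc z).1)
      fun z => (height_mem_Icc z).2

theorem mk_height_mem {y : X} (hy : y ≠ x) : (y, S.height y) ∈ S.space :=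
  subset_closure ⟨y, hy, rfl⟩

theorem mk_sheet_self_mem (b : Bool) : (x, S.sheet b x) ∈ S.space :=
  map_mem_closure (f := fun y => (y, S.sheet b y)) (continuous_id.prodMk (S.continuous_sheet b))
    (mem_closure_side b)
    fun y (hy : y ∈ S.side b) => ⟨y, (side_subset b hy).2, by simp only [height_eq_sheet hy]⟩

theorem isPreconnected_space (h : IsPreconnected ({x}ᶜ : Set X)) : IsPreconnected S.space :=
  (h.image _ (continuousOn_id.prodMk continuousOn_height)).closure

theorem isCompact_space [CompactSpace X] : IsCompact S.space := by
  refine (isCompact_univ.prod (isCompact_Icc (a := (0 : ℝ)) (b := 1))).of_isClosed_subset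
    isClosed_closure (closure_minimal ?_ (isClosed_univ.prod isClosed_Icc))
  rintro _ ⟨y, -, rfl⟩
  exact ⟨mem_univ y, (height_mem_Icc y).1, (height_mem_Icc y).2.trans (S.g_mem_Icc y).2⟩

variable (S) in
def pt (b : Bool) : S.space := ⟨(x, S.sheet b x), mk_sheet_self_mem b⟩

variable (S) in
def proj (z : S.space) : X := (z : X × ℝ).1

theorem continuous_proj : Continuous S.proj := continuous_fst.comp continuous_subtype_val

theorem surjective_proj : Function.Surjective S.proj := by
  intro y
  by_cases hy : y = x
  · exact ⟨S.pt false, hy.symm⟩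
  · exact ⟨⟨_, mk_height_mem hy⟩, rfl⟩

theorem pt_false_ne_pt_true : S.pt false ≠ S.pt true := fun h => by
  simpa [pt, sheet, S.g_self] using congrArg (fun z : S.space => (z : X × ℝ).2) h

theorem isOpen_core (s : ℝ) : IsOpen (S.core s) :=
  S.isOpen_U.inter (isOpen_lt continuous_const S.continuous_g)

theorem mem_core_self {s : ℝ} (hs : 0 < s) : x ∈ S.core s :=
  ⟨S.mem_U, by simp [S.g_self, hs]⟩

theorem dist_sheet_self_lt {s : ℝ} {y : X} (hy : y ∈ S.core s) (hs : 0 < s) (b : Bool) :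
    dist (S.sheet b y) (S.sheet b x) < s := by
  have hgy : 1 - s < S.g y := hy.2
  have := S.g_mem_Icc y
  cases b
  · simpa [sheet] using hs
  · simp only [sheet, cond_true, S.g_self, Real.dist_eq, abs_sub_lt_iff]
    exact ⟨by linarith [this.2], by linarith⟩

theorem lt_dist_sheet_self {s : ℝ} {y : X} (hy : y ∈ S.core s) (hs : s ≤ 1 / 4) {b c : Bool}
    (h : b ≠ c) : s < dist (S.sheet c y) (S.sheet b x) := by
  have hgy : 1 - s < S.g y := hy.2
  have := S.g_mem_Icc y
  cases b <;> cases c <;> simp only [ne_eq, not_true_eq_false] at h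
  · simp only [sheet, cond_true, cond_false, Pi.zero_apply, Real.dist_eq, sub_zero]
    rw [abs_of_nonneg this.1]
    linarith
  · simp [sheet, S.g_self, Real.dist_eq]
    linarith

theorem dist_sheet_self_sheet_self {b c : Bool} (h : b ≠ c) :
    dist (S.sheet c x) (S.sheet b x) = 1 := by
  cases b <;> cases c <;> simp_all [sheet, S.g_self]

variable (S) in
def box (W : Set X) (s : ℝ) (b : Bool) : Set S.space :=
  Subtype.val ⁻¹' (W ×ˢ Metric.ball (S.sheet b x) s)

theorem isOpen_box {W : Set X} (hW : IsOpen W) (s : ℝ) (b : Bool) : IsOpen (S.box W s b) :=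
  (hW.prod Metric.isOpen_ball).preimage continuous_subtype_val

theorem pt_mem_box {W : Set X} {s : ℝ} (hxW : x ∈ W) (hs : 0 < s) (b : Bool) :
    S.pt b ∈ S.box W s b :=
  ⟨hxW, Metric.mem_ball_self hs⟩

theorem pt_notMem_box {W : Set X} {s : ℝ} (hs : s ≤ 1 / 4) {b c : Bool} (h : b ≠ c) :
    S.pt c ∉ S.box W s b := fun hc => by
  have : dist (S.sheet c x) (S.sheet b x) < s := hc.2
  rw [dist_sheet_self_sheet_self h] at this
  linarith

theorem nonempty_frontier_box [PreconnectedSpace S.space] {W : Set X} {s : ℝ} (hxW : x ∈ W)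
    (hs₀ : 0 < s) (hs : s ≤ 1 / 4) (b : Bool) : (frontier (S.box W s b)).Nonempty := by
  rw [nonempty_iff_ne_empty, Ne, frontier_eq_empty_iff, not_or]
  exact ⟨(nonempty_of_mem (pt_mem_box hxW hs₀ b)).ne_empty,
    fun h => pt_notMem_box hs (Bool.not_ne_self b).symm (h ▸ mem_univ _)⟩

theorem disjoint_frontier_box {W : Set X} {s : ℝ} (hs : s ≤ 1 / 4) {b c : Bool} (h : b ≠ c) :
    Disjoint (frontier (S.box W s b)) (frontier (S.box W s c)) := by
  have hsnd {d : Bool} {z : S.space} (hz : z ∈ frontier (S.box W s d)) :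
      dist (z : X × ℝ).2 (S.sheet d x) ≤ s :=
    closure_minimal (t := (fun w : S.space => (w : X × ℝ).2) ⁻¹' Metric.closedBall (S.sheet d x) s)
      (fun _ hw => Metric.ball_subset_closedBall hw.2)
      (Metric.isClosed_closedBall.preimage (continuous_snd.comp continuous_subtype_val))
      (frontier_subset_closure hz)
  refine disjoint_left.mpr fun z h₁ h₂ => ?_
  have := dist_triangle_left (S.sheet c x) (S.sheet b x) (z : X × ℝ).2
  rw [dist_sheet_self_sheet_self h] at this
  linarith [hsnd h₁, hsnd h₂]

theorem exists_core_nhds {b : Bool} {T : Set S.space} (hT : T ∈ 𝓝 (S.pt b)) :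
    ∃ s, 0 < s ∧ s ≤ 1 / 4 ∧ ∃ O ∈ 𝓝 x, O ⊆ S.core s ∧ S.box O s b ⊆ T := by
  obtain ⟨O, hO, s, hs, hOT⟩ := exists_preimage_prod_ball_subset hT
  have hs' : 0 < min s (1 / 4) := lt_min hs (by norm_num)
  refine ⟨min s (1 / 4), hs', min_le_right _ _, O ∩ S.core (min s (1 / 4)),
    Filter.inter_mem hO ((isOpen_core _).mem_nhds (mem_core_self hs')), inter_subset_right, ?_⟩
  exact fun w hw => hOT ⟨hw.1.1, Metric.ball_subset_ball (min_le_left _ _) hw.2⟩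

variable [T1Space X]

theorem snd_eq_height {p : X × ℝ} (hp : p ∈ S.space) (hpx : p.1 ≠ x) : p.2 = S.height p.1 :=
  continuousOn_height.snd_eq_of_mem_closure_graph isOpen_compl_singleton hp hpx

theorem exists_sheet {p : X × ℝ} (hp : p ∈ S.space) (hpU : p.1 ∈ S.U) :
    ∃ b, p.1 ∈ insert x (S.side b) ∧ p.2 = S.sheet b p.1 := by
  by_cases hpx : p.1 = x
  · have hzero : S.space ⊆ {q | q.2 * (q.2 - S.g q.1) = 0} := by
      refine closure_minimal ?_ (isClosed_eq (continuous_snd.mul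
        (continuous_snd.sub (S.continuous_g.comp continuous_fst))) continuous_const)
      rintro _ ⟨y, -, rfl⟩
      rcases indicator_eq_zero_or_self S.B S.g y with h | h <;> simp [height, h]
    have hq : p.2 * (p.2 - S.g p.1) = 0 := hzero hp
    rw [hpx, S.g_self, mul_eq_zero, sub_eq_zero] at hq
    rcases hq with h | h
    · exact ⟨false, by simp [hpx], by simp [sheet, h, hpx]⟩
    · exact ⟨true, by simp [hpx], by simp [sheet, h, hpx, S.g_self]⟩
  · obtain ⟨b, hb⟩ := exists_mem_side hpU hpx
    exact ⟨b, mem_insert_of_mem x hb, (snd_eq_height hp hpx).trans (height_eq_sheet hb)⟩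

theorem existsUnique_proj_eq {y : X} (hy : y ≠ x) : ∃! z, S.proj z = y :=
  ⟨⟨_, mk_height_mem hy⟩, rfl, fun z (hz : (z : X × ℝ).1 = y) =>
    Subtype.ext (Prod.ext hz ((snd_eq_height z.2 (by rwa [hz])).trans (congrArg S.height hz)))⟩

theorem injOn_proj : InjOn S.proj {z | S.proj z ≠ x} := fun _ hz _ _ h =>
  (existsUnique_proj_eq hz).unique rfl h.symm

theorem proj_preimage_self : S.proj ⁻¹' {x} = {S.pt false, S.pt true} := by
  ext z
  refine ⟨fun (hz : (z : X × ℝ).1 = x) => ?_, by rintro (rfl | rfl) <;> rfl⟩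
  obtain ⟨b, -, hb⟩ := exists_sheet z.2 (by rw [hz]; exact S.mem_U)
  have hz' : (z : X × ℝ) = (S.pt b : X × ℝ) := Prod.ext hz (hb.trans (congrArg _ hz))
  cases b
  exacts [Or.inl (Subtype.ext hz'), Or.inr (Subtype.ext hz')]

theorem image_val_box {W : Set X} {s : ℝ} (hxW : x ∈ W) (hW : W ⊆ S.core s) (hs₀ : 0 < s)
    (hs : s ≤ 1 / 4) (b : Bool) :
    Subtype.val '' S.box W s b = (fun y => (y, S.sheet b y)) '' insert x (W ∩ S.side b) := by
  rw [box, Subtype.image_preimage_coe]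
  ext p
  constructor
  · rintro ⟨hp, hpW, hpb⟩
    obtain ⟨c, hc, hpc⟩ := exists_sheet hp (hW hpW).1
    obtain rfl : c = b := by
      by_contra h
      exact (lt_dist_sheet_self (hW hpW) hs (Ne.symm h)).not_gt (hpc ▸ hpb)
    exact ⟨p.1, hc.imp_right fun h => ⟨hpW, h⟩, Prod.ext rfl hpc.symm⟩
  · rintro ⟨y, hy, rfl⟩
    have hyW : y ∈ W := by
      rcases hy with rfl | h
      exacts [hxW, h.1]
    refine ⟨?_, hyW, dist_sheet_self_lt (hW hyW) hs₀ b⟩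
    rcases hy with rfl | ⟨-, hy⟩
    · exact mk_sheet_self_mem b
    · show (y, S.sheet b y) ∈ S.space
      rw [← height_eq_sheet hy]
      exact mk_height_mem (side_subset b hy).2

theorem isPreconnected_box {V : Set X} {s : ℝ} (hV : IsPreconnected V) (hxV : x ∈ V)
    (hVcore : V ⊆ S.core s) (hs₀ : 0 < s) (hs : s ≤ 1 / 4) (b : Bool) :
    IsPreconnected (S.box V s b) := by
  rw [← IsInducing.subtypeVal.isPreconnected_image, image_val_box hxV hVcore hs₀ hs b]
  refine (hV.insert_inter_of_diff_singleton_subset_union hxV (isOpen_side b)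
    (isOpen_side (!b)) (disjoint_side (Bool.not_ne_self b).symm) ?_).image _
    (continuous_id.prodMk (S.continuous_sheet b)).continuousOn
  rw [side_union_side_not]
  exact sdiff_subset_sdiff_left (hVcore.trans inter_subset_left)

theorem exists_isPreconnected_nhds_pt [LocallyConnectedSpace X] (b : Bool) {T : Set S.space}
    (hT : T ∈ 𝓝 (S.pt b)) : ∃ V ∈ 𝓝 (S.pt b), IsPreconnected V ∧ V ⊆ T := by
  obtain ⟨s, hs₀, hs, O, hO, hOcore, hOT⟩ := exists_core_nhds hT
  obtain ⟨V, hVO, hVo, hxV, hVc⟩ :=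
    locallyConnectedSpace_iff_subsets_isOpen_isConnected.mp ‹_› x O hO
  exact ⟨S.box V s b, (isOpen_box hVo s b).mem_nhds (pt_mem_box hxV hs₀ b),
    isPreconnected_box hVc.isPreconnected hxV (hVO.trans hOcore) hs₀ hs b,
    fun w hw => hOT ⟨hVO hw.1, hw.2⟩⟩

theorem exists_isPreconnected_nhds_of_proj_ne [LocallyConnectedSpace X] {z : S.space}
    (hz : S.proj z ≠ x) {T : Set S.space} (hT : T ∈ 𝓝 z) :
    ∃ V ∈ 𝓝 z, IsPreconnected V ∧ V ⊆ T := by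
  obtain ⟨O, hO, s, hs, hOT⟩ := exists_preimage_prod_ball_subset hT
  have hball : S.height ⁻¹' Metric.ball (z : X × ℝ).2 s ∈ 𝓝 (S.proj z) := by
    rw [snd_eq_height z.2 hz]
    exact (continuousOn_height.continuousAt (isOpen_compl_singleton.mem_nhds hz))
      |>.preimage_mem_nhds (Metric.ball_mem_nhds _ hs)
  obtain ⟨V, hV, hVc, hVsub⟩ := locallyConnectedSpace_iff_connected_subsets.mp ‹_› _ _
    (Filter.inter_mem hO (Filter.inter_mem (isOpen_compl_singleton.mem_nhds hz) hball))
  have hsnd {w : S.space} (hw : S.proj w ∈ V) : (w : X × ℝ).2 = S.height (S.proj w) :=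
    snd_eq_height w.2 (hVsub hw).2.1
  refine ⟨Subtype.val ⁻¹' (V ×ˢ univ),
    continuous_subtype_val.continuousAt.preimage_mem_nhds (prod_mem_nhds hV Filter.univ_mem), ?_,
    fun w hw => hOT ⟨(hVsub hw.1).1, hsnd hw.1 ▸ (hVsub hw.1).2.2⟩⟩
  have himage : Subtype.val '' (Subtype.val ⁻¹' (V ×ˢ univ) : Set S.space) =
      (fun y => (y, S.height y)) '' V := by
    rw [Subtype.image_preimage_coe]
    ext p
    constructor
    · rintro ⟨hp, hpV, -⟩
      exact ⟨p.1, hpV, Prod.ext rfl (snd_eq_height hp (hVsub hpV).2.1).symm⟩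
    · rintro ⟨y, hy, rfl⟩
      exact ⟨mk_height_mem (hVsub hy).2.1, hy, trivial⟩
  rw [← IsInducing.subtypeVal.isPreconnected_image, himage]
  exact hVc.image _ (continuousOn_id.prodMk (continuousOn_height.mono fun y hy => (hVsub hy).2.1))

theorem locallyConnectedSpace [LocallyConnectedSpace X] : LocallyConnectedSpace S.space := by
  refine locallyConnectedSpace_iff_connected_subsets.mpr fun z T hT => ?_
  by_cases hz : S.proj z = x
  · have hz' : z ∈ S.proj ⁻¹' {x} := hz
    rw [proj_preimage_self] at hz'
    rcases hz' with rfl | rfl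
    exacts [exists_isPreconnected_nhds_pt false hT, exists_isPreconnected_nhds_pt true hT]
  · exact exists_isPreconnected_nhds_of_proj_ne hz hT

theorem proj_mem_frontier_of_mem_frontier_box [CompactSpace X] [T2Space X] {W : Set X} {s : ℝ}
    (hWo : IsOpen W) (hxW : x ∈ W) (hW : W ⊆ S.core s) (hs₀ : 0 < s) (hs : s ≤ 1 / 4) {b : Bool}
    {z : S.space} (hz : z ∈ frontier (S.box W s b)) : S.proj z ∈ frontier W := by
  rw [(isOpen_box hWo s b).frontier_eq] at hz
  obtain ⟨hzcl, hzN⟩ := hz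
  have hlift : Continuous fun y => (y, S.sheet b y) := continuous_id.prodMk (S.continuous_sheet b)
  have hz' := map_mem_closure continuous_subtype_val hzcl (mapsTo_image _ _)
  rw [image_val_box hxW hW hs₀ hs b, hlift.isClosedMap.closure_image_eq_of_continuous hlift] at hz'
  obtain ⟨y, hy, hyz⟩ := hz'
  rw [hWo.frontier_eq, proj, ← hyz]
  refine ⟨closure_mono (insert_subset hxW inter_subset_left) hy, fun hyW => hzN ?_⟩
  rw [box, mem_preimage, ← hyz]
  exact ⟨hyW, dist_sheet_self_lt (hW hyW) hs₀ b⟩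

theorem isEndpoint_pt [CompactSpace X] [T2Space X] [PreconnectedSpace S.space]
    (hx : MengerOrderLE x 2) (b : Bool) : IsEndpoint (S.pt b) := by
  intro T hT
  obtain ⟨s, hs₀, hs, O, hO, hOcore, hOT⟩ := exists_core_nhds hT
  obtain ⟨W, hW, hWO, hWfin, hWcard⟩ := hx O hO
  have hxW : x ∈ interior W := mem_interior_iff_mem_nhds.mpr hW
  have hWcore : interior W ⊆ S.core s := interior_subset.trans (hWO.trans hOcore)
  have hproj : MapsTo S.proj
      (frontier (S.box (interior W) s b) ∪ frontier (S.box (interior W) s (!b))) (frontier W) := by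
    rintro z (hz | hz) <;> exact frontier_interior_subset
      (proj_mem_frontier_of_mem_frontier_box isOpen_interior hxW hWcore hs₀ hs hz)
  have hinj := injOn_proj.mono fun z hz (hzx : S.proj z = x) => (hproj hz).2 (by rwa [hzx])
  obtain ⟨p, hp⟩ := exists_eq_singleton_of_injOn_of_ncard_le_two hWfin hWcard hinj hproj
    (disjoint_frontier_box hs (Bool.not_ne_self b).symm) (nonempty_frontier_box hxW hs₀ hs b)
    (nonempty_frontier_box hxW hs₀ hs (!b))
  exact ⟨S.box (interior W) s b, (isOpen_box isOpen_interior s b).mem_nhds (pt_mem_box hxW hs₀ b),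
    fun w hw => hOT ⟨interior_subset.trans hWO hw.1, hw.2⟩, p, hp⟩

end LocalCut

theorem lifting_at_local_cut_point_general {X : Type} [MetricSpace X] [CompactSpace X]
    [LocallyConnectedSpace X] (x : X)
    (h2 : MengerOrderLE x 2 ∧ ¬ MengerOrderLE x 1)
    (hloc : IsLocalCutPoint x) (hcut : ¬ IsCutPoint x) :
    ∃ (Y : Type) (mY : MetricSpace Y), CompactSpace Y ∧ ConnectedSpace Y ∧
      LocallyConnectedSpace Y ∧
      ∃ φ : Y → X, Continuous φ ∧ Function.Surjective φ ∧
        (∀ y : X, y ≠ x → ∃! z : Y, φ z = y) ∧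
        ∃ a b : Y, a ≠ b ∧ φ ⁻¹' {x} = {a, b} ∧ IsEndpoint a ∧ IsEndpoint b := by
  obtain ⟨S⟩ := hloc.nonempty_localCut
  have hS : IsConnected S.space :=
    ⟨⟨_, LocalCut.mk_sheet_self_mem false⟩, S.isPreconnected_space (not_not.mp hcut)⟩
  have : ConnectedSpace S.space := Subtype.connectedSpace hS
  exact ⟨S.space, inferInstance, isCompact_iff_compactSpace.mp S.isCompact_space, this,
    S.locallyConnectedSpace, S.proj, S.continuous_proj, S.surjective_proj,
    fun _ => S.existsUnique_proj_eq, S.pt false, S.pt true, S.pt_false_ne_pt_true,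
    S.proj_preimage_self, S.isEndpoint_pt h2.1 false, S.isEndpoint_pt h2.1 true⟩

/-- If `x` has Menger order 2, is a local cut point but not a cut point of the
Peano continuum `X`, then `X` can be "cut" at `x`: there is a Peano continuum `X̂`
and a continuous surjection `φ : X̂ → X` which is one-to-one over every `y ≠ x`,
while `φ⁻¹(x)` consists of exactly two endpoints of `X̂`. -/
theorem lifting_at_local_cut_point {X : Type} [MetricSpace X] [CompactSpace X]
    [ConnectedSpace X] [LocallyConnectedSpace X] (x : X)
    (h2 : MengerOrderLE x 2 ∧ ¬ MengerOrderLE x 1)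
    (hloc : IsLocalCutPoint x) (hcut : ¬ IsCutPoint x) :
    ∃ (Y : Type) (mY : MetricSpace Y), CompactSpace Y ∧ ConnectedSpace Y ∧
      LocallyConnectedSpace Y ∧
      ∃ φ : Y → X, Continuous φ ∧ Function.Surjective φ ∧
        (∀ y : X, y ≠ x → ∃! z : Y, φ z = y) ∧
        ∃ a b : Y, a ≠ b ∧ φ ⁻¹' {x} = {a, b} ∧ IsEndpoint a ∧ IsEndpoint b :=
  lifting_at_local_cut_point_general x h2 hloc hcut
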